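/- Let A be a unital C*-algebra, let 𝒰 be a nonprincipal ultrafilter on ℕ, and let p, q : ℕ → A be sequences such that each p(n) and each q(n) is a projection. Suppose ‖q(n)·p(n)·q(n) − p(n)‖ tends to 0 along 𝒰. Then there exists a sequence q' : ℕ → A of projections such that p(n) ≤ q'(n) for every n (i.e., p(n)·q'(n) = p(n)), and ‖q'(n) − q(n)‖ tends to 0 along 𝒰. -/

import Mathlib

/-!
Replace `q` by `y = p + (1 - p) q (1 - p)`. Then `p * y = p`, and `y` is within
`2 ‖q p q - p‖` of `q`, so `y` is nearly idempotent. Hence the spectrum of `y` avoids `1/2`, and the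
spectral projection of `y` for `[1/2, ∞)` is a projection close to `y`. It still lies above `p`,
because `p * y = p` forces `p * f y = f 1 • p` for every continuous `f`. This gives a pointwise
bound `‖q' - q‖ ≤ 32 ‖q p q - p‖`.
-/

open Filter

section Ring

variable {R : Type*} [Ring R] {p q : R}

lemma IsIdempotentElem.add_compression_sub_eq (hp : IsIdempotentElem p) (q : R) :
    p + (1 - p) * q * (1 - p) - q = p * (1 - q) + (1 - p) * (1 - q) * p := by
  have h : p * (1 - q) + (1 - p) * (1 - q) * p = p + (1 - p) * q * (1 - p) - q + (p - p * p) := by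
    noncomm_ring
  rw [h, hp.eq, sub_self, add_zero]

lemma IsIdempotentElem.mul_self_sub_eq (hq : IsIdempotentElem q) (a : R) :
    a * a - a = q * (a - q) + (a - q) * q + (a - q) * (a - q) - (a - q) := by
  have h : q * (a - q) + (a - q) * q + (a - q) * (a - q) - (a - q) = a * a - a + (q - q * q) := by
    noncomm_ring
  rw [h, hq.eq, sub_self, add_zero]

end Ring

lemma one_mem_spectrum_of_mul_eq {S R : Type*} [CommSemiring S] [Ring R] [Algebra S R]
    {a e : R} (he0 : e ≠ 0) (he : e * a = e) : (1 : S) ∈ spectrum S a := by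
  rw [spectrum.mem_iff, map_one]
  intro hu
  exact he0 (hu.mul_left_eq_zero.mp (by rw [mul_sub, mul_one, he, sub_self]))

lemma continuousOn_indicator_one_of_disjoint_frontier {X : Type*} [TopologicalSpace X]
    {s t : Set X} (hst : Disjoint s (frontier t)) :
    ContinuousOn (t.indicator (1 : X → ℝ)) s := by
  classical
  rw [← Set.piecewise_eq_indicator]
  exact ContinuousOn.piecewise (fun x hx => absurd hx.2 (hst.notMem_of_mem_left hx.1))
    continuousOn_const continuousOn_const

lemma abs_indicator_Ici_half_sub_le (x : ℝ) :
    |(Set.Ici (1 / 2 : ℝ)).indicator 1 x - x| ≤ 2 * |x * x - x| := by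
  have hfactor : |x * x - x| = |x| * |x - 1| := by rw [← abs_mul]; ring_nf
  rw [hfactor]
  by_cases hx : 1 / 2 ≤ x
  · rw [Set.indicator_of_mem (Set.mem_Ici.mpr hx), Pi.one_apply, abs_sub_comm,
      abs_of_pos (by linarith : (0 : ℝ) < x)]
    nlinarith [abs_nonneg (x - 1)]
  · rw [Set.indicator_of_notMem (by simpa using hx), zero_sub, abs_neg,
      abs_of_neg (by linarith : x - 1 < 0)]
    nlinarith [abs_nonneg x]

section CStarRing

variable {A : Type*} [NormedRing A] [StarRing A] [CStarRing A] {p q : A}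

lemma IsStarProjection.norm_one_sub_mul_le (hq : IsStarProjection q) (x : A) :
    ‖(1 - q) * x‖ ≤ ‖q * x * q - x‖ := by
  have hfactor : (1 - q) * x = -((1 - q) * (q * x * q - x)) := by
    rw [mul_sub, ← mul_assoc, ← mul_assoc, hq.one_sub_mul_self, zero_mul, zero_mul, zero_sub,
      neg_neg]
  calc ‖(1 - q) * x‖ = ‖(1 - q) * (q * x * q - x)‖ := by rw [hfactor, norm_neg]
    _ ≤ ‖1 - q‖ * ‖q * x * q - x‖ := norm_mul_le _ _
    _ ≤ 1 * ‖q * x * q - x‖ := by gcongr; exact hq.one_sub.norm_le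
    _ = ‖q * x * q - x‖ := one_mul _

lemma IsStarProjection.norm_mul_self_sub_le (hq : IsStarProjection q) (a : A) :
    ‖a * a - a‖ ≤ 3 * ‖a - q‖ + ‖a - q‖ ^ 2 := by
  have hq1 : ‖q‖ ≤ 1 := hq.norm_le
  calc ‖a * a - a‖ ≤ ‖q‖ * ‖a - q‖ + ‖a - q‖ * ‖q‖ + ‖a - q‖ * ‖a - q‖ + ‖a - q‖ := by
        rw [hq.isIdempotentElem.mul_self_sub_eq a]
        refine (norm_sub_le _ _).trans (add_le_add ?_ le_rfl)
        refine (norm_add_le _ _).trans (add_le_add ((norm_add_le _ _).trans ?_) (norm_mul_le _ _))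
        exact add_le_add (norm_mul_le _ _) (norm_mul_le _ _)
    _ ≤ 3 * ‖a - q‖ + ‖a - q‖ ^ 2 := by nlinarith [norm_nonneg (a - q)]

lemma IsStarProjection.norm_add_compression_sub_le (hp : IsStarProjection p)
    (hq : IsStarProjection q) :
    ‖p + (1 - p) * q * (1 - p) - q‖ ≤ 2 * ‖q * p * q - p‖ := by
  have hright : ‖p * (1 - q)‖ = ‖(1 - q) * p‖ := by
    rw [← norm_star, star_mul, hp.isSelfAdjoint.star_eq, hq.one_sub.isSelfAdjoint.star_eq]
  calc ‖p + (1 - p) * q * (1 - p) - q‖ ≤ ‖p * (1 - q)‖ + ‖(1 - p) * ((1 - q) * p)‖ := by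
        rw [hp.isIdempotentElem.add_compression_sub_eq, mul_assoc (1 - p)]
        exact norm_add_le _ _
    _ ≤ ‖(1 - q) * p‖ + 1 * ‖(1 - q) * p‖ := by
        rw [hright]
        gcongr
        exact (norm_mul_le _ _).trans (by gcongr; exact hp.one_sub.norm_le)
    _ ≤ 2 * ‖q * p * q - p‖ := by linarith [hq.norm_one_sub_mul_le p]

end CStarRing

section CStarAlgebra

variable {A : Type*} [CStarAlgebra A] {a e p q : A}

lemma mul_cfcHom_eq_smul (ha : IsSelfAdjoint a) (he : e * a = e) (h1 : (1 : ℝ) ∈ spectrum ℝ a)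
    (g : C(spectrum ℝ a, ℝ)) : e * cfcHom ha g = g ⟨1, h1⟩ • e := by
  induction g using ContinuousMap.induction_on_of_compact with
  | const r =>
    change e * cfcHom ha (algebraMap ℝ _ r) = r • e
    rw [AlgHomClass.commutes, Algebra.algebraMap_eq_smul_one, mul_smul_comm, mul_one]
  | id => simpa [cfcHom_id ha] using he
  | star_id => simpa [cfcHom_id ha] using he
  | add f g hf hg => simp [mul_add, hf, hg, add_smul]
  | mul f g hf hg => rw [map_mul, ← mul_assoc, hf, smul_mul_assoc, hg, smul_smul]; rfl
  | frequently f hf =>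
    have hclosed : IsClosed {g : C(spectrum ℝ a, ℝ) | e * cfcHom ha g = g ⟨1, h1⟩ • e} :=
      isClosed_eq (continuous_const.mul (cfcHom_continuous ha)) (by fun_prop)
    exact hclosed.mem_of_frequently_of_tendsto hf tendsto_id

lemma mul_cfc_eq_smul (f : ℝ → ℝ) (he : e * a = e)
    (hf : ContinuousOn f (spectrum ℝ a) := by cfc_cont_tac) (ha : IsSelfAdjoint a := by cfc_tac) :
    e * cfc f a = f 1 • e := by
  obtain rfl | he0 := eq_or_ne e 0
  · simp
  rw [cfc_apply f a, mul_cfcHom_eq_smul ha he (one_mem_spectrum_of_mul_eq he0 he)]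
  rfl

lemma abs_mul_self_sub_le_norm (ha : IsSelfAdjoint a) {x : ℝ} (hx : x ∈ spectrum ℝ a) :
    |x * x - x| ≤ ‖a * a - a‖ := by
  obtain _ | _ := subsingleton_or_nontrivial A
  · simp [spectrum.of_subsingleton] at hx
  have hcfc : cfc (fun x : ℝ => x * x - x) a = a * a - a := by
    rw [cfc_sub _ _ a, cfc_mul _ _ a, cfc_id' ℝ a]
  have hmem : x * x - x ∈ spectrum ℝ (a * a - a) := by
    rw [← hcfc, cfc_map_spectrum _ a]
    exact ⟨x, hx, rfl⟩
  simpa using spectrum.norm_le_norm_of_mem hmem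

noncomputable def roundProjection (a : A) : A := cfc ((Set.Ici (1 / 2 : ℝ)).indicator 1) a

section Rounding

variable (ha : IsSelfAdjoint a) (hsmall : ‖a * a - a‖ < 1 / 4)
include ha hsmall

lemma continuousOn_indicator_Ici_half_spectrum :
    ContinuousOn ((Set.Ici (1 / 2 : ℝ)).indicator (1 : ℝ → ℝ)) (spectrum ℝ a) := by
  refine continuousOn_indicator_one_of_disjoint_frontier ?_
  rw [frontier_Ici, Set.disjoint_singleton_right]
  intro hmem
  have := abs_mul_self_sub_le_norm ha hmem
  norm_num at this
  linarith

lemma isStarProjection_roundProjection : IsStarProjection (roundProjection a) := by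
  have hcont := continuousOn_indicator_Ici_half_spectrum ha hsmall
  refine ⟨?_, cfc_predicate _ a⟩
  rw [IsIdempotentElem, roundProjection, ← cfc_mul _ _ a]
  exact cfc_congr fun x _ => by rw [Set.indicator_apply]; split_ifs <;> simp

lemma norm_roundProjection_sub_le : ‖roundProjection a - a‖ ≤ 2 * ‖a * a - a‖ := by
  have hcont := continuousOn_indicator_Ici_half_spectrum ha hsmall
  have hsub : roundProjection a - a =
      cfc (fun x => (Set.Ici (1 / 2 : ℝ)).indicator 1 x - x) a := by
    rw [cfc_sub _ _ a, cfc_id' ℝ a, roundProjection]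
  rw [hsub]
  refine norm_cfc_le (by positivity) fun x hx => ?_
  exact (abs_indicator_Ici_half_sub_le x).trans
    (mul_le_mul_of_nonneg_left (abs_mul_self_sub_le_norm ha hx) zero_le_two)

lemma mul_roundProjection_eq (he : e * a = e) : e * roundProjection a = e := by
  have hcont := continuousOn_indicator_Ici_half_spectrum ha hsmall
  rw [roundProjection, mul_cfc_eq_smul _ he,
    Set.indicator_of_mem (by norm_num : (1 : ℝ) ∈ Set.Ici (1 / 2)), Pi.one_apply, one_smul]

end Rounding

theorem IsStarProjection.exists_isStarProjection_mul_eq_norm_sub_le (hp : IsStarProjection p)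
    (hq : IsStarProjection q) :
    ∃ r, IsStarProjection r ∧ p * r = p ∧ ‖r - q‖ ≤ 32 * ‖q * p * q - p‖ := by
  set d := ‖q * p * q - p‖
  by_cases hd : 1 / 32 ≤ d
  · refine ⟨1, .one A, mul_one p, ?_⟩
    linarith [hq.one_sub.norm_le]
  set y := p + (1 - p) * q * (1 - p)
  have hy : IsSelfAdjoint y := by
    have := hq.isSelfAdjoint.conjugate (1 - p)
    rw [hp.one_sub.isSelfAdjoint.star_eq] at this
    exact hp.isSelfAdjoint.add this
  have hpy : p * y = p := by
    rw [mul_add, hp.isIdempotentElem.eq, ← mul_assoc, ← mul_assoc, hp.mul_one_sub_self,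
      zero_mul, zero_mul, add_zero]
  have hyq : ‖y - q‖ ≤ 2 * d := hp.norm_add_compression_sub_le hq
  have hyy : ‖y * y - y‖ ≤ 7 * d :=
    (hq.norm_mul_self_sub_le y).trans (by nlinarith [norm_nonneg (y - q)])
  have hsmall : ‖y * y - y‖ < 1 / 4 := by linarith
  refine ⟨roundProjection y, isStarProjection_roundProjection hy hsmall,
    mul_roundProjection_eq hy hsmall hpy, ?_⟩
  calc ‖roundProjection y - q‖ ≤ ‖roundProjection y - y‖ + ‖y - q‖ :=
        norm_sub_le_norm_sub_add_norm_sub _ _ _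
    _ ≤ 2 * (7 * d) + 2 * d := by
        gcongr
        exact (norm_roundProjection_sub_le hy hsmall).trans (by linarith)
    _ ≤ 32 * d := by linarith [norm_nonneg (q * p * q - p)]

end CStarAlgebra

theorem exists_representing_sequence_above_general
    {A : Type*} [NormedRing A] [StarRing A] [CStarRing A]
    [CompleteSpace A] [NormedAlgebra ℂ A] [StarModule ℂ A]
    (𝒰 : Ultrafilter ℕ)
    (p q : ℕ → A)
    (hp : ∀ n, IsSelfAdjoint (p n) ∧ p n * p n = p n)
    (hq : ∀ n, IsSelfAdjoint (q n) ∧ q n * q n = q n)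
    (hle : Tendsto (fun n => ‖q n * p n * q n - p n‖) 𝒰 (nhds 0)) :
    ∃ q' : ℕ → A,
      (∀ n, IsSelfAdjoint (q' n) ∧ q' n * q' n = q' n) ∧
      (∀ n, p n * q' n = p n) ∧
      Tendsto (fun n => ‖q' n - q n‖) 𝒰 (nhds 0) := by
  let _ : CStarAlgebra A := {}
  choose q' hq'_proj hq'_above hq'_near using fun n =>
    IsStarProjection.exists_isStarProjection_mul_eq_norm_sub_le (p := p n) (q := q n)
      ⟨(hp n).2, (hp n).1⟩ ⟨(hq n).2, (hq n).1⟩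
  refine ⟨q', fun n => ⟨(hq'_proj n).isSelfAdjoint, (hq'_proj n).isIdempotentElem⟩, hq'_above, ?_⟩
  simpa using squeeze_zero (fun n => norm_nonneg _) hq'_near (by simpa using hle.const_mul 32)

theorem exists_representing_sequence_above
    {A : Type*} [NormedRing A] [StarRing A] [CStarRing A]
    [CompleteSpace A] [NormedAlgebra ℂ A] [StarModule ℂ A]
    (𝒰 : Ultrafilter ℕ) (h𝒰 : (𝒰 : Filter ℕ) ≤ Filter.cofinite)
    (p q : ℕ → A)
    (hp : ∀ n, IsSelfAdjoint (p n) ∧ p n * p n = p n)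
    (hq : ∀ n, IsSelfAdjoint (q n) ∧ q n * q n = q n)
    (hle : Tendsto (fun n => ‖q n * p n * q n - p n‖) 𝒰 (nhds 0)) :
    ∃ q' : ℕ → A,
      (∀ n, IsSelfAdjoint (q' n) ∧ q' n * q' n = q' n) ∧
      (∀ n, p n * q' n = p n) ∧
      Tendsto (fun n => ‖q' n - q n‖) 𝒰 (nhds 0) :=
  exists_representing_sequence_above_general 𝒰 p q hp hq hle
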